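/- arXiv:2512.15496 — 2 statements merged into one kernel-verified Lean document; each statement's English description precedes it below -/
import Mathlib

section
/- Let Λ be a restorative similarity type, M a Kripke model, and S a symmetric Λ-simulation on M (a Λ-simulation such that S w v implies S v w). Then any two worlds related by S satisfy exactly the same formulas of the language L_{~,Λ}, which extends the Λ-language with classical negation ~ (where w ⊩ ~φ iff w ⊮ φ). -/
inductive Op : Type
  | smile
  | frown
  | cons
  | det
  | incons
  | undet
  deriving DecidableEq

/-- Formulas of the language with classical negation and all restorative modalities. -/
inductive Fm (K : Type) : Type
  | prop (k : K)
  | top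
  | bot
  | and (a b : Fm K)
  | or (a b : Fm K)
  | neg (a : Fm K)
  | smile (a : Fm K)
  | frown (a : Fm K)
  | cons (a : Fm K)
  | det (a : Fm K)
  | incons (a : Fm K)
  | undet (a : Fm K)

def Sat {W K : Type} (R : W → W → Prop) (P : K → W → Prop) : W → Fm K → Prop
  | w, .prop k => P k w
  | _, .top => True
  | _, .bot => False
  | w, .and a b => Sat R P w a ∧ Sat R P w b
  | w, .or a b => Sat R P w a ∨ Sat R P w b
  | w, .neg a => ¬ Sat R P w a
  | w, .smile a => ∃ v, R w v ∧ ¬ Sat R P v a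
  | w, .frown a => ∀ v, R w v → ¬ Sat R P v a
  | w, .cons a => ¬ Sat R P w a ∨ ∀ v, R w v → Sat R P v a
  | w, .det a => Sat R P w a ∨ ∀ v, R w v → ¬ Sat R P v a
  | w, .incons a => Sat R P w a ∧ ∃ v, R w v ∧ ¬ Sat R P v a
  | w, .undet a => ¬ Sat R P w a ∧ ∃ v, R w v ∧ Sat R P v a

/-- `InLang Λ φ`: `φ` belongs to the language `L_{~,Λ}`, i.e.\ it uses classical
negation freely but modal operators only from `Λ`. -/
def InLang {K : Type} (Λ : Set Op) : Fm K → Prop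
  | .prop _ => True
  | .top => True
  | .bot => True
  | .and a b => InLang Λ a ∧ InLang Λ b
  | .or a b => InLang Λ a ∧ InLang Λ b
  | .neg a => InLang Λ a
  | .smile a => Op.smile ∈ Λ ∧ InLang Λ a
  | .frown a => Op.frown ∈ Λ ∧ InLang Λ a
  | .cons a => Op.cons ∈ Λ ∧ InLang Λ a
  | .det a => Op.det ∈ Λ ∧ InLang Λ a
  | .incons a => Op.incons ∈ Λ ∧ InLang Λ a
  | .undet a => Op.undet ∈ Λ ∧ InLang Λ a

/-- The simulation conditions, parametric in the similarity type `Λ`. -/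
def SimConds {K Wi Wj : Type} (Λ : Set Op)
    (Ri : Wi → Wi → Prop) (Rj : Wj → Wj → Prop)
    (Pi : K → Wi → Prop) (Pj : K → Wj → Prop)
    (Sij : Wi → Wj → Prop) (Sji : Wj → Wi → Prop)
    (Sii : Wi → Wi → Prop) (Sjj : Wj → Wj → Prop) : Prop :=
  (∀ k w v, Sij w v → Pi k w → Pj k v) ∧
  (Op.smile ∈ Λ → ∀ w v s, Sij w v → Ri w s → ∃ t, Rj v t ∧ Sji t s) ∧
  (Op.frown ∈ Λ → ∀ w v t, Sij w v → Rj v t → ∃ s, Ri w s ∧ Sji t s) ∧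
  (Op.cons ∈ Λ → ∀ w v t, Sij w v → Rj v t →
      (Sjj v t ∨ (Sji v w ∧ ∃ s, Ri w s ∧ Sij s t))) ∧
  (Op.det ∈ Λ → ∀ w v t, Sij w v → Rj v t →
      (Sjj t v ∨ ∃ s, Ri w s ∧ Sji t s)) ∧
  (Op.incons ∈ Λ → ∀ w v s, Sij w v → Ri w s →
      (Sii w s ∨ ∃ t, Rj v t ∧ Sji t s)) ∧
  (Op.undet ∈ Λ → ∀ w v s, Sij w v → Ri w s →
      (Sii s w ∨ (Sji v w ∧ ∃ t, Rj v t ∧ Sij s t)))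

/-- A `Λ`-simulation on a single Kripke model. -/
def IsSim {K W : Type} (Λ : Set Op) (R : W → W → Prop) (P : K → W → Prop)
    (S : W → W → Prop) : Prop :=
  SimConds Λ R R P P S S S S

theorem stmt18_aux {W K : Type} (Λ : Set Op)
    (R : W → W → Prop) (P : K → W → Prop) (S : W → W → Prop)
    (hsim : IsSim Λ R P S) (hsym : ∀ w v, S w v → S v w) :
    ∀ φ : Fm K, InLang Λ φ → ∀ w v : W, S w v →
      Sat R P w φ → Sat R P v φ := by
  obtain ⟨hP, hsm, hfr, hco, hde, hin, hun⟩ := hsim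
  intro φ
  induction φ with
  | prop k => intro _ w v hS h; exact hP k w v hS h
  | top => intro _ _ _ _ _; trivial
  | bot => intro _ _ _ _ h; exact h
  | and a b iha ihb =>
    rintro ⟨hla, hlb⟩ w v hS ⟨ha, hb⟩
    exact ⟨iha hla w v hS ha, ihb hlb w v hS hb⟩
  | or a b iha ihb =>
    rintro ⟨hla, hlb⟩ w v hS (ha | hb)
    · exact Or.inl (iha hla w v hS ha)
    · exact Or.inr (ihb hlb w v hS hb)
  | neg a iha =>
    intro hla w v hS h hv
    exact h (iha hla v w (hsym w v hS) hv)
  | smile a iha =>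
    rintro ⟨hop, hla⟩ w v hS ⟨s, hRs, hns⟩
    obtain ⟨t, hRt, hSts⟩ := hsm hop w v s hS hRs
    exact ⟨t, hRt, fun ht => hns (iha hla t s hSts ht)⟩
  | frown a iha =>
    rintro ⟨hop, hla⟩ w v hS h t hRt
    obtain ⟨s, hRs, hSts⟩ := hfr hop w v t hS hRt
    exact fun ht => h s hRs (iha hla t s hSts ht)
  | cons a iha =>
    rintro ⟨hop, hla⟩ w v hS (hna | hall)
    · exact Or.inl fun hv => hna (iha hla v w (hsym w v hS) hv)
    · by_cases hva : Sat R P v a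
      · refine Or.inr fun t hRt => ?_
        rcases hco hop w v t hS hRt with hvt | ⟨_, s, hRs, hSst⟩
        · exact iha hla v t hvt hva
        · exact iha hla s t hSst (hall s hRs)
      · exact Or.inl hva
  | det a iha =>
    rintro ⟨hop, hla⟩ w v hS (ha | hall)
    · exact Or.inl (iha hla w v hS ha)
    · by_cases hva : Sat R P v a
      · exact Or.inl hva
      · refine Or.inr fun t hRt ht => ?_
        rcases hde hop w v t hS hRt with htv | ⟨s, hRs, hSts⟩
        · exact hva (iha hla t v htv ht)
        · exact hall s hRs (iha hla t s hSts ht)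
  | incons a iha =>
    rintro ⟨hop, hla⟩ w v hS ⟨hwa, s, hRs, hns⟩
    refine ⟨iha hla w v hS hwa, ?_⟩
    rcases hin hop w v s hS hRs with hws | ⟨t, hRt, hSts⟩
    · exact absurd (iha hla w s hws hwa) hns
    · exact ⟨t, hRt, fun ht => hns (iha hla t s hSts ht)⟩
  | undet a iha =>
    rintro ⟨hop, hla⟩ w v hS ⟨hnw, s, hRs, hsa⟩
    refine ⟨fun hv => hnw (iha hla v w (hsym w v hS) hv), ?_⟩
    rcases hun hop w v s hS hRs with hsw | ⟨_, t, hRt, hSst⟩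
    · exact absurd (iha hla s w hsw hsa) hnw
    · exact ⟨t, hRt, iha hla s t hSst hsa⟩

theorem stmt18 {W K : Type} (Λ : Set Op)
    (R : W → W → Prop) (P : K → W → Prop) (S : W → W → Prop)
    (hsim : IsSim Λ R P S) (hsym : ∀ w v, S w v → S v w) :
    ∀ w v : W, S w v →
      ∀ φ : Fm K, InLang Λ φ → (Sat R P w φ ↔ Sat R P v φ) := by
  intro w v hS φ hφ
  exact ⟨stmt18_aux Λ R P S hsim hsym φ hφ w v hS,
    stmt18_aux Λ R P S hsim hsym φ hφ v w (hsym w v hS)⟩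
end

section
/- Undefinability of □ from restoration modalities with classical negation: consider the Kripke model with worlds W = {w, v}, R = {(w,w)}, and all truth sets empty. Then S = {(w,v),(v,w),(w,w)} is a symmetric Λ-simulation for any Λ ⊆ {°⌣, ●⌣, °⌢, ●⌢}; consequently w and v satisfy precisely the same L_{~,Λ}-formulas. Since w does not satisfy □⊥ while v does, the formula □⊥ is not equivalent to any L_{~,Λ}-formula, and hence none of □, ◇, ⌣, ⌢ is definable in L_{~,Λ}. -/
theorem stmt19 (K : Type) (Λ : Set Op)
    (hΛ : Λ ⊆ {Op.cons, Op.incons, Op.det, Op.undet}) :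
    let R : Fin 2 → Fin 2 → Prop := fun a b => a = 0 ∧ b = 0
    let P : K → Fin 2 → Prop := fun _ _ => False
    let S : Fin 2 → Fin 2 → Prop := fun a b =>
      (a = 0 ∧ b = 1) ∨ (a = 1 ∧ b = 0) ∨ (a = 0 ∧ b = 0)
    -- S is a symmetric Λ-simulation:
    IsSim Λ R P S ∧ (∀ w v, S w v → S v w) ∧
    -- consequently w = 0 and v = 1 satisfy the same L_{~,Λ}-formulas:
    (∀ φ : Fm K, InLang Λ φ → (Sat R P 0 φ ↔ Sat R P 1 φ)) ∧
    -- w does not satisfy □⊥ while v does: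
    ¬ (∀ y, R 0 y → False) ∧ (∀ y, R 1 y → False) ∧
    -- hence □⊥ is not equivalent to any L_{~,Λ}-formula:
    ¬ ∃ φ : Fm K, InLang Λ φ ∧
        ∀ (W : Type) (R' : W → W → Prop) (P' : K → W → Prop) (x : W),
          Sat R' P' x φ ↔ (∀ y, R' x y → False) := by
  intro R P S
  -- the simulation facts
  have hsim : IsSim Λ R P S := by
    refine ⟨?_, ?_, ?_, ?_, ?_, ?_, ?_⟩
    · intro k w v _ h; exact h
    · intro h; have := hΛ h; simp at this
    · intro h; have := hΛ h; simp at this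
    · intro _ w v t hS hR
      obtain ⟨hv, ht⟩ := hR; subst hv; subst ht
      exact Or.inl (Or.inr (Or.inr ⟨rfl, rfl⟩))
    · intro _ w v t hS hR
      obtain ⟨hv, ht⟩ := hR; subst hv; subst ht
      exact Or.inl (Or.inr (Or.inr ⟨rfl, rfl⟩))
    · intro _ w v s hS hR
      obtain ⟨hw, hs⟩ := hR; subst hw; subst hs
      exact Or.inl (Or.inr (Or.inr ⟨rfl, rfl⟩))
    · intro _ w v s hS hR
      obtain ⟨hw, hs⟩ := hR; subst hw; subst hs
      exact Or.inl (Or.inr (Or.inr ⟨rfl, rfl⟩))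
  have hsymm : ∀ w v, S w v → S v w := by
    intro w v h
    rcases h with ⟨h1, h2⟩ | ⟨h1, h2⟩ | ⟨h1, h2⟩ <;> subst h1 <;> subst h2 <;>
      simp [S]
  have hmain : ∀ φ : Fm K, InLang Λ φ → (Sat R P 0 φ ↔ Sat R P 1 φ) := by
    intro φ
    induction φ with
    | prop k => intro _; simp [Sat, P]
    | top => intro _; simp [Sat]
    | bot => intro _; simp [Sat]
    | and a b iha ihb =>
        intro h; have := iha h.1; have := ihb h.2; simp only [Sat]; tauto
    | or a b iha ihb =>
        intro h; have := iha h.1; have := ihb h.2; simp only [Sat]; tauto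
    | neg a iha =>
        intro h; have := iha h; simp only [Sat]; tauto
    | smile a iha => intro h; have := hΛ h.1; simp at this
    | frown a iha => intro h; have := hΛ h.1; simp at this
    | cons a iha =>
        intro h
        simp only [Sat, R]
        constructor
        · intro _; exact Or.inr (by rintro v ⟨h1, _⟩; exact absurd h1 (by decide))
        · intro _
          by_cases hc : Sat R P 0 a
          · exact Or.inr (by rintro v ⟨_, hv⟩; subst hv; exact hc)
          · exact Or.inl hc
    | det a iha =>
        intro h
        simp only [Sat, R]
        constructor
        · intro _; exact Or.inr (by rintro v ⟨h1, _⟩; exact absurd h1 (by decide))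
        · intro _
          by_cases hc : Sat R P 0 a
          · exact Or.inl hc
          · exact Or.inr (by rintro v ⟨_, hv⟩; subst hv; exact hc)
    | incons a iha =>
        intro h
        simp only [Sat, R]
        constructor
        · rintro ⟨_, v, ⟨_, hv⟩, hn⟩; subst hv
          exact absurd ‹Sat R P 0 a› hn
        · rintro ⟨_, v, ⟨h1, _⟩, _⟩; exact absurd h1 (by decide)
    | undet a iha =>
        intro h
        simp only [Sat, R]
        constructor
        · rintro ⟨hn, v, ⟨_, hv⟩, hs⟩; subst hv
          exact absurd hs hn
        · rintro ⟨_, v, ⟨h1, _⟩, _⟩; exact absurd h1 (by decide)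
  refine ⟨hsim, hsymm, hmain, ?_, ?_, ?_⟩
  · intro hbox; exact hbox 0 ⟨rfl, rfl⟩
  · rintro y ⟨h1, _⟩; exact absurd h1 (by decide)
  · rintro ⟨φ, hφ, hequiv⟩
    have h0 := hequiv (Fin 2) R P 0
    have h1 := hequiv (Fin 2) R P 1
    have := (hmain φ hφ).mpr (h1.mpr (by rintro y ⟨hy, _⟩; exact absurd hy (by decide)))
    exact h0.mp this 0 ⟨rfl, rfl⟩
end
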